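/- arXiv:1703.09377 — 2 statements merged into one kernel-verified Lean document; each statement's English description precedes it below -/
import Mathlib

section
/- If κ > λₘₐₓ(L)²/(2 λ₂(L)²) for a connected graph Laplacian L, then the block matrix [[2κ λ₂(L) I, L], [L, λ₂(L) I]] (with blocks of size n×n) is positive definite. -/
/-!
For `x = (u, v)` the quadratic form of the block matrix is
`2κλ₂ ‖u‖² + 2 ⟪u, L v⟫ + λ₂ ‖v‖²`. As `L` is symmetric with spectrum in `[0, λₘₐₓ]`, functional
calculus gives `L² ≤ λₘₐₓ² I`, i.e. `‖L v‖ ≤ λₘₐₓ ‖v‖`, so by Cauchy–Schwarz the cross term is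
bounded by `2 λₘₐₓ ‖u‖ ‖v‖`. The resulting binary form is positive definite precisely because
`λₘₐₓ² < (2κλ₂) λ₂`. Positivity of `λ₂` comes from `L` being positive semidefinite.
-/

open Matrix

/-- μ is an eigenvalue of the real matrix L. -/
def IsEigenvalue {n : ℕ} (L : Matrix (Fin n) (Fin n) ℝ) (μ : ℝ) : Prop :=
  ∃ v : Fin n → ℝ, v ≠ 0 ∧ L.mulVec v = μ • v

theorem mul_add_two_mul_add_mul_pos {c d M p q t : ℝ} (hd : 0 < d) (hM : M ^ 2 < c * d)
    (hp : 0 ≤ p) (hq : 0 ≤ q) (hpq : 0 < p + q) (ht : t ^ 2 ≤ M ^ 2 * (p * q)) :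
    0 < c * p + 2 * t + d * q := by
  have hc : 0 < c := pos_of_mul_pos_left (by nlinarith [sq_nonneg M]) hd.le
  have hs : 0 < c * p + d * q := by
    rcases hp.eq_or_lt with rfl | hp <;> nlinarith
  rcases (mul_nonneg hp hq).eq_or_lt with hpq0 | hpq0
  · have : t = 0 := by nlinarith [sq_nonneg t]
    linarith
  · by_contra! h
    nlinarith [sq_nonneg (c * p - d * q), mul_lt_mul_of_pos_right hM hpq0]

namespace Matrix

variable {m k : Type*} [Fintype m] [Fintype k]

section OrderedRing

variable {R : Type*} [CommRing R] [LinearOrder R] [IsStrictOrderedRing R]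

theorem dotProduct_self_nonneg (v : m → R) : 0 ≤ v ⬝ᵥ v :=
  Finset.sum_nonneg fun i _ => mul_self_nonneg (v i)

theorem sq_dotProduct_le (v w : m → R) : (v ⬝ᵥ w) ^ 2 ≤ (v ⬝ᵥ v) * (w ⬝ᵥ w) := by
  simpa [dotProduct, pow_two] using Finset.sum_mul_sq_le_sq_mul_sq Finset.univ v w

end OrderedRing

variable [DecidableEq m] [DecidableEq k]

open scoped MatrixOrder in
theorem IsHermitian.dotProduct_mulVec_self_le {A : Matrix m m ℝ} (hA : A.IsHermitian) {M : ℝ}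
    (hM : ∀ μ ∈ spectrum ℝ A, |μ| ≤ M) (v : m → ℝ) :
    (A *ᵥ v) ⬝ᵥ (A *ᵥ v) ≤ M ^ 2 * (v ⬝ᵥ v) := by
  -- discharges the `IsSelfAdjoint A` side conditions of the `cfc` lemmas below
  have hsa : IsSelfAdjoint A := hA
  have hcfc : M ^ 2 • (1 : Matrix m m ℝ) - A * A = cfc (fun x => M ^ 2 - x * x) A := by
    rw [cfc_sub (fun _ => M ^ 2) (fun x => x * x) A, cfc_const (M ^ 2) A,
      cfc_mul (fun x => x) (fun x => x) A, cfc_id' ℝ A, Algebra.algebraMap_eq_smul_one]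
  have hpsd : (M ^ 2 • (1 : Matrix m m ℝ) - A * A).PosSemidef := by
    rw [← nonneg_iff_posSemidef, hcfc]
    refine cfc_nonneg fun x hx => ?_
    nlinarith [hM x hx, abs_nonneg x, sq_abs x]
  have hsymm : Aᵀ = A := by simpa [conjTranspose_eq_transpose_of_trivial] using hA.eq
  have := hpsd.dotProduct_mulVec_nonneg v
  rw [star_trivial, sub_mulVec, dotProduct_sub, smul_mulVec, one_mulVec, dotProduct_smul,
    smul_eq_mul, ← mulVec_mulVec, dotProduct_mulVec, ← mulVec_transpose, hsymm] at this
  linarith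

theorem posDef_fromBlocks_smul_one {c d M : ℝ} (B : Matrix m k ℝ)
    (hB : ∀ v, (B *ᵥ v) ⬝ᵥ (B *ᵥ v) ≤ M ^ 2 * (v ⬝ᵥ v)) (hd : 0 < d) (hM : M ^ 2 < c * d) :
    (fromBlocks (c • 1) B Bᵀ (d • 1) : Matrix (m ⊕ k) (m ⊕ k) ℝ).PosDef := by
  have hherm : (fromBlocks (c • 1) B Bᵀ (d • 1) : Matrix (m ⊕ k) (m ⊕ k) ℝ).IsHermitian :=
    isHermitian_fromBlocks_iff.mpr ⟨by simp [IsHermitian], by simp, by simp, by simp [IsHermitian]⟩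
  refine .of_dotProduct_mulVec_pos hherm fun x hx => ?_
  obtain ⟨u, v, rfl⟩ : ∃ u v, x = Sum.elim u v := ⟨_, _, (Sum.elim_comp_inl_inr x).symm⟩
  have hnorm : 0 < u ⬝ᵥ u + v ⬝ᵥ v := by
    simpa [sumElim_dotProduct_sumElim] using dotProduct_star_self_pos_iff.mpr hx
  have hcross : v ⬝ᵥ (Bᵀ *ᵥ u) = u ⬝ᵥ (B *ᵥ v) := by
    rw [dotProduct_mulVec, vecMul_transpose, dotProduct_comm]
  have hform : star (Sum.elim u v) ⬝ᵥ (fromBlocks (c • 1) B Bᵀ (d • 1) *ᵥ Sum.elim u v)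
      = c * (u ⬝ᵥ u) + 2 * (u ⬝ᵥ (B *ᵥ v)) + d * (v ⬝ᵥ v) := by
    simp only [star_trivial, fromBlocks_mulVec, Sum.elim_comp_inl, Sum.elim_comp_inr,
      sumElim_dotProduct_sumElim, dotProduct_add, hcross, smul_mulVec, one_mulVec,
      dotProduct_smul, smul_eq_mul]
    ring
  have hcs : (u ⬝ᵥ (B *ᵥ v)) ^ 2 ≤ M ^ 2 * ((u ⬝ᵥ u) * (v ⬝ᵥ v)) := calc
    _ ≤ (u ⬝ᵥ u) * ((B *ᵥ v) ⬝ᵥ (B *ᵥ v)) := sq_dotProduct_le u (B *ᵥ v)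
    _ ≤ (u ⬝ᵥ u) * (M ^ 2 * (v ⬝ᵥ v)) := by gcongr; exacts [dotProduct_self_nonneg u, hB v]
    _ = _ := by ring
  rw [hform]
  exact mul_add_two_mul_add_mul_pos hd hM (dotProduct_self_nonneg u) (dotProduct_self_nonneg v)
    hnorm hcs

end Matrix

theorem isEigenvalue_iff_mem_spectrum {n : ℕ} {A : Matrix (Fin n) (Fin n) ℝ} {μ : ℝ} :
    IsEigenvalue A μ ↔ μ ∈ spectrum ℝ A := by
  rw [← spectrum_toLin', ← Module.End.hasEigenvalue_iff_mem_spectrum]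
  constructor
  · rintro ⟨v, hv, hAv⟩
    exact Module.End.hasEigenvalue_of_hasEigenvector
      ⟨Module.End.mem_eigenspace_iff.mpr (by simpa using hAv), hv⟩
  · intro h
    obtain ⟨v, hv, hne⟩ := h.exists_hasEigenvector
    exact ⟨v, hne, by simpa using Module.End.mem_eigenspace_iff.mp hv⟩

theorem IsEigenvalue.nonneg {n : ℕ} {A : Matrix (Fin n) (Fin n) ℝ} {μ : ℝ} (hA : A.PosSemidef)
    (h : IsEigenvalue A μ) : 0 ≤ μ :=
  (posSemidef_iff_isHermitian_and_spectrum_nonneg.mp hA).2 (isEigenvalue_iff_mem_spectrum.mp h)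

theorem block_matrix_posdef_general {n : ℕ} (G : SimpleGraph (Fin n))
    [DecidableRel G.Adj]
    (μ₂ μmax : ℝ)
    (hμ₂eig : IsEigenvalue (G.lapMatrix ℝ) μ₂) (hμ₂ne : μ₂ ≠ 0)
    (hμmax : ∀ μ : ℝ, IsEigenvalue (G.lapMatrix ℝ) μ → μ ≤ μmax)
    (κ : ℝ) (hκ : κ > μmax ^ 2 / (2 * μ₂ ^ 2)) :
    (Matrix.fromBlocks ((2 * κ * μ₂) • (1 : Matrix (Fin n) (Fin n) ℝ))
      (G.lapMatrix ℝ) (G.lapMatrix ℝ) (μ₂ • (1 : Matrix (Fin n) (Fin n) ℝ))).PosDef := by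
  have hL := SimpleGraph.posSemidef_lapMatrix ℝ G
  have hμ₂ : 0 < μ₂ := lt_of_le_of_ne (hμ₂eig.nonneg hL) hμ₂ne.symm
  have hspec : ∀ μ ∈ spectrum ℝ (G.lapMatrix ℝ), |μ| ≤ μmax := fun μ hμ => by
    rw [← isEigenvalue_iff_mem_spectrum] at hμ
    rw [abs_of_nonneg (hμ.nonneg hL)]
    exact hμmax μ hμ
  have hgap : μmax ^ 2 < 2 * κ * μ₂ * μ₂ := by
    rw [gt_iff_lt, div_lt_iff₀ (by positivity)] at hκ
    linarith
  have hblock := posDef_fromBlocks_smul_one (G.lapMatrix ℝ)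
    (hL.isHermitian.dotProduct_mulVec_self_le hspec) hμ₂ hgap
  rwa [(G.isSymm_lapMatrix (R := ℝ)).eq] at hblock

/-- If κ > λmax(L)²/(2 λ₂(L)²) for a connected graph Laplacian L, the block
matrix [[2κλ₂ I, L],[L, λ₂ I]] is positive definite. -/
theorem block_matrix_posdef {n : ℕ} (G : SimpleGraph (Fin n))
    [DecidableRel G.Adj] (hG : G.Connected)
    (μ₂ μmax : ℝ)
    (hμ₂eig : IsEigenvalue (G.lapMatrix ℝ) μ₂) (hμ₂ne : μ₂ ≠ 0)
    (hμ₂min : ∀ μ : ℝ, IsEigenvalue (G.lapMatrix ℝ) μ → μ ≠ 0 → μ₂ ≤ μ)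
    (hμmaxeig : IsEigenvalue (G.lapMatrix ℝ) μmax)
    (hμmax : ∀ μ : ℝ, IsEigenvalue (G.lapMatrix ℝ) μ → μ ≤ μmax)
    (κ : ℝ) (hκpos : 0 < κ) (hκ : κ > μmax ^ 2 / (2 * μ₂ ^ 2)) :
    (Matrix.fromBlocks ((2 * κ * μ₂) • (1 : Matrix (Fin n) (Fin n) ℝ))
      (G.lapMatrix ℝ) (G.lapMatrix ℝ) (μ₂ • (1 : Matrix (Fin n) (Fin n) ℝ))).PosDef :=
  block_matrix_posdef_general G μ₂ μmax hμ₂eig hμ₂ne hμmax κ hκ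
end

section
/- Let L be the Laplacian of a connected graph on n nodes, restricted to the subspace S = {y ∈ ℝⁿ : 1ₙᵀ y = 0}. Consider the quadratic form V(p̃,q̃) = (1/2)[p̃ᵀ q̃ᵀ](L ⊗ [[2κ,1],[1,1]])[p̃; q̃] on S × S. If κ > max{1, λₘₐₓ(L)²/(2 λ₂(L)²)}, then V is positive definite on S × S. -/
/-!
Writing `Q x = x ⬝ᵥ L *ᵥ x`, symmetry of `L` gives
`2κ Q p + 2 p ⬝ᵥ L *ᵥ q + Q q = (2κ - 1) Q p + Q (p + q)`.
Both terms are nonnegative because `L` is positive semidefinite, and for a connected graph `Q`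
vanishes on the zero-sum subspace only at `0`. So if `p ≠ 0` the first term is positive
(as `2κ > 1`), and if `p = 0` the second one is `Q q > 0`.
-/

open Matrix

theorem Matrix.IsSymm.add_dotProduct_mulVec_add {ι R : Type*} [Fintype ι] [CommRing R]
    {A : Matrix ι ι R} (hA : A.IsSymm) (x y : ι → R) :
    (x + y) ⬝ᵥ A *ᵥ (x + y) = x ⬝ᵥ A *ᵥ x + 2 * (x ⬝ᵥ A *ᵥ y) + y ⬝ᵥ A *ᵥ y := by
  have hyx : y ⬝ᵥ A *ᵥ x = x ⬝ᵥ A *ᵥ y := by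
    rw [dotProduct_mulVec, ← mulVec_transpose, hA.eq, dotProduct_comm]
  simp only [mulVec_add, dotProduct_add, add_dotProduct, hyx]
  ring

theorem Matrix.PosSemidef.kronecker_form_pos {ι : Type*} [Fintype ι] {A : Matrix ι ι ℝ}
    (hA : A.PosSemidef) {S : Set (ι → ℝ)} (hS : ∀ x ∈ S, x ≠ 0 → 0 < x ⬝ᵥ A *ᵥ x)
    {κ : ℝ} (hκ : 1 / 2 < κ) {p q : ι → ℝ} (hp : p ∈ S) (hq : q ∈ S) (hpq : ¬(p = 0 ∧ q = 0)) :
    0 < 2 * κ * (p ⬝ᵥ A *ᵥ p) + 2 * (p ⬝ᵥ A *ᵥ q) + q ⬝ᵥ A *ᵥ q := by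
  have hnonneg (x : ι → ℝ) : 0 ≤ x ⬝ᵥ A *ᵥ x := by
    simpa only [star_trivial] using hA.dotProduct_mulVec_nonneg x
  have hsymm : A.IsSymm := by
    rw [IsSymm, ← conjTranspose_eq_transpose_of_trivial]
    exact hA.isHermitian
  have hsplit : 2 * κ * (p ⬝ᵥ A *ᵥ p) + 2 * (p ⬝ᵥ A *ᵥ q) + q ⬝ᵥ A *ᵥ q
      = (2 * κ - 1) * (p ⬝ᵥ A *ᵥ p) + (p + q) ⬝ᵥ A *ᵥ (p + q) := by
    rw [hsymm.add_dotProduct_mulVec_add]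
    ring
  rw [hsplit]
  by_cases hp0 : p = 0
  · have hq0 : q ≠ 0 := fun hq0 => hpq ⟨hp0, hq0⟩
    subst hp0
    simpa using hS q hq hq0
  · have hQp := hS p hp hp0
    nlinarith [hnonneg (p + q)]

theorem SimpleGraph.dotProduct_lapMatrix_mulVec_pos {V : Type*} [Fintype V] [DecidableEq V]
    {G : SimpleGraph V} [DecidableRel G.Adj] (hG : G.Connected) {x : V → ℝ}
    (hx : ∑ i, x i = 0) (hx0 : x ≠ 0) : 0 < x ⬝ᵥ G.lapMatrix ℝ *ᵥ x := by
  refine lt_of_le_of_ne (by simpa using (G.posSemidef_lapMatrix ℝ).dotProduct_mulVec_nonneg x)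
    fun h => hx0 ?_
  obtain ⟨i₀⟩ := hG.nonempty
  have hconst : ∀ i, x i = x i₀ :=
    fun i => (G.lapMatrix_toLinearMap₂'_apply'_eq_zero_iff_forall_reachable x).1
      (by rw [toLinearMap₂'_apply']; exact h.symm) i i₀ (hG.preconnected i i₀)
  have hxi₀ : x i₀ = 0 := by
    simpa [hconst, (Fintype.card_pos_iff.2 ⟨i₀⟩).ne'] using hx
  ext i
  rw [hconst, hxi₀, Pi.zero_apply]

theorem lyapunov_form_posdef_on_subspace_general {n : ℕ} (G : SimpleGraph (Fin n))
    [DecidableRel G.Adj] (hG : G.Connected)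
    (μ₂ μmax : ℝ)
    (κ : ℝ) (hκ : κ > max 1 (μmax ^ 2 / (2 * μ₂ ^ 2)))
    (p q : Fin n → ℝ)
    (hp : (fun _ => (1 : ℝ)) ⬝ᵥ p = 0) (hq : (fun _ => (1 : ℝ)) ⬝ᵥ q = 0)
    (hpq : ¬(p = 0 ∧ q = 0)) :
    0 < (1 / 2) * (2 * κ * (p ⬝ᵥ (G.lapMatrix ℝ).mulVec p)
      + 2 * (p ⬝ᵥ (G.lapMatrix ℝ).mulVec q)
      + q ⬝ᵥ (G.lapMatrix ℝ).mulVec q) := by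
  have hκ' : 1 / 2 < κ := by linarith [le_max_left 1 (μmax ^ 2 / (2 * μ₂ ^ 2))]
  have hpos := (G.posSemidef_lapMatrix ℝ).kronecker_form_pos (S := {x | ∑ i, x i = 0})
    (fun _ => SimpleGraph.dotProduct_lapMatrix_mulVec_pos hG) hκ'
    ((one_dotProduct p).symm.trans hp) ((one_dotProduct q).symm.trans hq) hpq
  positivity

/-- For κ > max{1, λmax²/(2λ₂²)}, the form
V(p̃,q̃) = (1/2)(2κ p̃ᵀLp̃ + 2 p̃ᵀLq̃ + q̃ᵀLq̃) is positive definite on the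
subspace where 1ᵀp̃ = 0 and 1ᵀq̃ = 0. -/
theorem lyapunov_form_posdef_on_subspace {n : ℕ} (G : SimpleGraph (Fin n))
    [DecidableRel G.Adj] (hG : G.Connected)
    (μ₂ μmax : ℝ)
    (hμ₂eig : IsEigenvalue (G.lapMatrix ℝ) μ₂) (hμ₂ne : μ₂ ≠ 0)
    (hμ₂min : ∀ μ : ℝ, IsEigenvalue (G.lapMatrix ℝ) μ → μ ≠ 0 → μ₂ ≤ μ)
    (hμmaxeig : IsEigenvalue (G.lapMatrix ℝ) μmax)
    (hμmax : ∀ μ : ℝ, IsEigenvalue (G.lapMatrix ℝ) μ → μ ≤ μmax)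
    (κ : ℝ) (hκ : κ > max 1 (μmax ^ 2 / (2 * μ₂ ^ 2)))
    (p q : Fin n → ℝ)
    (hp : (fun _ => (1 : ℝ)) ⬝ᵥ p = 0) (hq : (fun _ => (1 : ℝ)) ⬝ᵥ q = 0)
    (hpq : ¬(p = 0 ∧ q = 0)) :
    0 < (1 / 2) * (2 * κ * (p ⬝ᵥ (G.lapMatrix ℝ).mulVec p)
      + 2 * (p ⬝ᵥ (G.lapMatrix ℝ).mulVec q)
      + q ⬝ᵥ (G.lapMatrix ℝ).mulVec q) :=
  lyapunov_form_posdef_on_subspace_general G hG μ₂ μmax κ hκ p q hp hq hpq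
end
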